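/- arXiv:1909.02362 — 2 statements merged into one kernel-verified Lean document; each statement's English description precedes it below -/
import Mathlib

section
/- Let K ≥ 1 users each be assigned a number of sub-carriers m_k ≥ 1 with ∑_k m_k = M, and suppose each user k has a rate function U_k : ℕ → ℝ that is strictly increasing. The greedy algorithm that starts from m_k = 1 for all k and repeatedly assigns one additional sub-carrier to a user attaining the current minimum rate U_k(m_k), until M sub-carriers are allocated, produces an allocation maximizing min_k U_k(m_k) over all allocations (m_k) with m_k ≥ 1 and ∑_k m_k = M. -/
/-- Greedy max-min sub-carrier allocation is optimal: starting from one
sub-carrier per user and repeatedly giving one more sub-carrier to a user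
attaining the current minimum rate, after `M - K` steps (so `M` sub-carriers
total) the resulting allocation maximizes `min_k U_k (m_k)` over all
allocations `m` with `m k ≥ 1` and `∑ k, m k = M`. -/
theorem greedy_subcarrier_allocation_optimal
    (K M : ℕ) (hK : 1 ≤ K) (hM : K ≤ M)
    (U : Fin K → ℕ → ℝ) (hU : ∀ k, StrictMono (U k))
    (a : ℕ → Fin K → ℕ)
    (h0 : a 0 = fun _ => 1)
    (hstep : ∀ s < M - K, ∃ kstar : Fin K,
      (∀ j : Fin K, U kstar (a s kstar) ≤ U j (a s j)) ∧
      a (s + 1) = Function.update (a s) kstar (a s kstar + 1))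
    (m : Fin K → ℕ) (hm1 : ∀ k, 1 ≤ m k) (hmsum : ∑ k, m k = M) :
    (⨅ k : Fin K, U k (m k)) ≤ ⨅ k : Fin K, U k (a (M - K) k) := by
  haveI : Nonempty (Fin K) := ⟨⟨0, hK⟩⟩
  set N := M - K with hN
  have hstep' : ∀ s, s < N → ∀ k, a s k ≤ a (s + 1) k := by
    intro s hs k
    obtain ⟨ks, -, heq⟩ := hstep s hs
    rw [heq, Function.update_apply]
    split_ifs with h
    · subst h; omega
    · exact le_rfl
  have hmono : ∀ s t, s ≤ t → t ≤ N → ∀ k, a s k ≤ a t k := by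
    intro s t hst htN k
    obtain ⟨d, rfl⟩ := Nat.exists_eq_add_of_le hst
    clear hst
    induction d with
    | zero => exact le_rfl
    | succ d ih =>
      calc a s k ≤ a (s + d) k := ih (by omega)
        _ ≤ a (s + d + 1) k := hstep' (s + d) (by omega) k
        _ = a (s + (d + 1)) k := by ring_nf
  have hsum : ∀ s, s ≤ N → ∑ k, a s k = K + s := by
    intro s hs
    induction s with
    | zero => rw [h0]; simp
    | succ s ih =>
      obtain ⟨ks, -, heq⟩ := hstep s (by omega)
      have e1 : ∑ k, a (s + 1) k
          = (a s ks + 1) + ∑ k ∈ Finset.univ.erase ks, a s k := by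
        rw [heq, ← Finset.add_sum_erase _ _ (Finset.mem_univ ks),
          Function.update_self]
        congr 1
        exact Finset.sum_congr rfl fun x hx =>
          Function.update_of_ne (Finset.ne_of_mem_erase hx) _ _
      have e2 : ∑ k, a s k = a s ks + ∑ k ∈ Finset.univ.erase ks, a s k :=
        (Finset.add_sum_erase _ _ (Finset.mem_univ ks)).symm
      have := ih (by omega)
      omega
  by_cases hcase : ∀ k, a N k ≤ m k
  · have hsN : ∑ k, a N k = M := by rw [hsum N le_rfl]; omega
    have heqall : ∀ k ∈ Finset.univ, a N k = m k :=
      (Finset.sum_eq_sum_iff_of_le (fun k _ => hcase k)).mp (by rw [hsN, hmsum])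
    have hme : m = a N := funext fun k => (heqall k (Finset.mem_univ k)).symm
    rw [hme]
  · push_neg at hcase
    obtain ⟨k, hk⟩ := hcase
    have hg2 : 2 ≤ a N k := by have := hm1 k; omega
    have hP : ∃ t, t ≤ N ∧ a t k = a N k := ⟨N, le_rfl, rfl⟩
    classical
    set t0 := Nat.find hP with ht0
    have hPt0 : t0 ≤ N ∧ a t0 k = a N k := Nat.find_spec hP
    have ht0pos : 1 ≤ t0 := by
      rcases Nat.eq_zero_or_pos t0 with h | h
      · exfalso
        have := hPt0.2
        rw [h, h0] at this
        simp at this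
        omega
      · exact h
    set s := t0 - 1 with hsdef
    have hslt : s < N := by omega
    have hsP : ¬ (s ≤ N ∧ a s k = a N k) := Nat.find_min hP (by omega)
    have hsne : a s k ≠ a N k := by
      intro h; exact hsP ⟨by omega, h⟩
    have hs1 : a (s + 1) k = a N k := by
      have : s + 1 = t0 := by omega
      rw [this]; exact hPt0.2
    obtain ⟨ks, hmin, heq⟩ := hstep s hslt
    have hkks : k = ks := by
      by_contra h
      rw [heq, Function.update_of_ne h] at hs1
      exact hsne hs1
    subst hkks
    have hask : a s k + 1 = a N k := by
      rw [heq, Function.update_self] at hs1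
      exact hs1
    have hbdd : BddBelow (Set.range fun k => U k (m k)) :=
      (Set.finite_range _).bddBelow
    refine le_trans (ciInf_le hbdd k) (le_ciInf fun j => ?_)
    calc U k (m k) ≤ U k (a s k) := (hU k).monotone (by omega)
      _ ≤ U j (a s j) := hmin j
      _ ≤ U j (a N j) := (hU j).monotone (hmono s N (by omega) le_rfl j)
end

section
/- In the greedy sub-carrier allocation algorithm, after every step the allocation m satisfies: for any two users j, k, if m_j ≥ m_k + 2 then U_j(m_j − 1) ≤ U_k(m_k); i.e., the last sub-carrier given to any user was given when that user was a minimizer. -/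
/-- Greedy invariant: along any execution of the greedy allocation algorithm
(assuming all rate values `U k n` are distinct), at every step `s`, for any
users `j, k` with `a s j ≥ a s k + 2` we have `U j (a s j - 1) ≤ U k (a s k)`;
i.e. the last sub-carrier given to any user was given when it was a minimizer. -/
theorem greedy_invariant
    (K : ℕ) (hK : 1 ≤ K)
    (U : Fin K → ℕ → ℝ) (hU : ∀ k, StrictMono (U k))
    (hdist : Function.Injective fun p : Fin K × ℕ => U p.1 p.2)
    (a : ℕ → Fin K → ℕ)
    (h0 : a 0 = fun _ => 1)
    (hstep : ∀ s : ℕ, ∃ kstar : Fin K,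
      (∀ j : Fin K, U kstar (a s kstar) ≤ U j (a s j)) ∧
      a (s + 1) = Function.update (a s) kstar (a s kstar + 1)) :
    ∀ s : ℕ, ∀ j k : Fin K, a s k + 2 ≤ a s j →
      U j (a s j - 1) ≤ U k (a s k) := by
  intro s
  induction s with
  | zero =>
    intro j k h
    simp [h0] at h
  | succ s ih =>
    intro j k h
    obtain ⟨ks, hmin, heq⟩ := hstep s
    rw [heq] at h ⊢
    by_cases hj : j = ks
    · subst hj
      by_cases hk : k = j
      · subst hk; simp at h
      · simp [Function.update_apply, hk] at h ⊢
        exact hmin k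
    · by_cases hk : k = ks
      · subst hk
        simp [Function.update_apply, hj] at h ⊢
        have h2 : a s k + 2 ≤ a s j := by omega
        exact (ih j k h2).trans (le_of_lt (hU k (Nat.lt_succ_self _)))
      · simp [Function.update_apply, hj, hk] at h ⊢
        exact ih j k h
end
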